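/- arXiv:2401.13431 — 6 statements merged into one kernel-verified Lean document; each statement's English description precedes it below -/
import Mathlib

section
/- Let C ⊆ ℝ^n be a salient polyhedral (finitely generated, closed) convex cone, let r be a nonzero vector spanning an extremal ray of C, and let φ : ℝ^n → ℝ^{n−1} be a surjective linear map whose kernel is the line spanned by r. Then for every nonzero vector s spanning an extremal ray of the cone φ(C), there exists a vector r' ∈ C spanning an extremal ray of C, with r' not a multiple of r, such that φ(r') is a positive multiple of s. -/
open Finset

/-- The convex cone generated by a set: all finite nonnegative linear combinations. -/
def coneGen {V : Type*} [AddCommGroup V] [Module ℝ V] (S : Set V) : Set V :=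
  {x | ∃ (n : ℕ) (c : Fin n → ℝ) (v : Fin n → V),
    (∀ i, 0 ≤ c i) ∧ (∀ i, v i ∈ S) ∧ x = ∑ i, c i • v i}

/-- A cone is salient if it contains no line. -/
def IsSalient {V : Type*} [AddCommGroup V] [Module ℝ V] (C : Set V) : Prop :=
  ∀ x ∈ C, -x ∈ C → x = 0

/-- A nonzero vector spans an extremal ray of the cone `C`. -/
def IsExtremalVec {V : Type*} [AddCommGroup V] [Module ℝ V] (C : Set V) (v : V) : Prop :=
  v ≠ 0 ∧ v ∈ C ∧ ∀ x y, x ∈ C → y ∈ C → v = x + y →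
    (∃ a : ℝ, 0 ≤ a ∧ x = a • v) ∧ (∃ b : ℝ, 0 ≤ b ∧ y = b • v)

/-!
Choose linear forms `ℓ` with `ℓ r = 1` and `ν` with `ν s = 1`. Among the finitely many generators
`v` lying over the open ray, `φ v = a • s` with `a > 0`, let `r'` minimise `ℓ v / a`, with minimum
`k`. Because `s` is extremal, the part of `C` lying over `ℝ_{≥0} s` is a face of `C`, hence
generated by the generators over that ray; so `L = ℓ - k (ν ∘ φ)` is nonnegative on it and
vanishes at `r'`. As `ker φ = ℝ r` and `L r = 1`, the map `(φ, L)` is injective, and this forces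
both summands of any decomposition `r' = u + v` in `C` to be multiples of `r'`.
-/

section ConeGen

variable {V : Type*} [AddCommGroup V] [Module ℝ V] {S : Set V}

theorem subset_coneGen : S ⊆ coneGen S := fun w hw =>
  ⟨1, fun _ => 1, fun _ => w, fun _ => zero_le_one, fun _ => hw, by simp⟩

theorem zero_mem_coneGen : (0 : V) ∈ coneGen S :=
  ⟨0, Fin.elim0, Fin.elim0, Fin.rec0, Fin.rec0, by simp⟩

theorem smul_mem_coneGen {t : ℝ} {x : V} (ht : 0 ≤ t) (hx : x ∈ coneGen S) :
    t • x ∈ coneGen S := by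
  obtain ⟨n, c, v, hc, hv, rfl⟩ := hx
  exact ⟨n, fun i => t * c i, v, fun i => mul_nonneg ht (hc i), hv, by
    simp only [Finset.smul_sum, mul_smul]⟩

theorem add_mem_coneGen {x y : V} (hx : x ∈ coneGen S) (hy : y ∈ coneGen S) :
    x + y ∈ coneGen S := by
  obtain ⟨n, c, v, hc, hv, rfl⟩ := hx
  obtain ⟨m, d, w, hd, hw, rfl⟩ := hy
  refine ⟨n + m, Fin.append c d, Fin.append v w,
    Fin.addCases (by simpa using hc) (by simpa using hd),
    Fin.addCases (by simpa using hv) (by simpa using hw), ?_⟩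
  simp [Fin.sum_univ_add]

theorem sum_mem_coneGen {ι : Type*} {I : Finset ι} {f : ι → V}
    (hf : ∀ i ∈ I, f i ∈ coneGen S) : ∑ i ∈ I, f i ∈ coneGen S := by
  classical
  induction I using Finset.induction with
  | empty => simpa using zero_mem_coneGen
  | insert i I hi ih =>
    rw [Finset.sum_insert hi]
    exact add_mem_coneGen (hf i (mem_insert_self i I))
      (ih fun j hj => hf j (mem_insert_of_mem hj))

theorem coneGen_subset_span : coneGen S ⊆ Submodule.span ℝ S := by
  rintro _ ⟨n, c, v, -, hv, rfl⟩
  exact Submodule.sum_mem _ fun i _ => Submodule.smul_mem _ _ (Submodule.subset_span (hv i))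

theorem nonneg_of_mem_coneGen (L : V →ₗ[ℝ] ℝ) (hL : ∀ v ∈ S, 0 ≤ L v) {x : V}
    (hx : x ∈ coneGen S) : 0 ≤ L x := by
  obtain ⟨n, c, v, hc, hv, rfl⟩ := hx
  simpa only [map_sum, map_smul, smul_eq_mul] using
    Finset.sum_nonneg fun i _ => mul_nonneg (hc i) (hL _ (hv i))

theorem IsSalient.nonneg_of_smul_mem {C : Set V} (hC : ∀ c : ℝ, 0 < c → ∀ z ∈ C, c • z ∈ C)
    (hsal : IsSalient C) {r : V} (hr0 : r ≠ 0) (hr : r ∈ C) {c : ℝ} (hc : c • r ∈ C) :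
    0 ≤ c := by
  by_contra! hneg
  refine hr0 (hsal r hr ?_)
  have := hC (-c)⁻¹ (inv_pos.2 (neg_pos.2 hneg)) _ hc
  rwa [smul_smul, inv_neg, neg_mul, inv_mul_cancel₀ hneg.ne, neg_one_smul] at this

end ConeGen

section Projection

variable {V W : Type*} [AddCommGroup V] [Module ℝ V] [AddCommGroup W] [Module ℝ W]
  {C : Set V} {φ : V →ₗ[ℝ] W} {s : W}

theorem IsExtremalVec.exists_nonneg_smul_of_map_add
    (hC : ∀ c : ℝ, 0 < c → ∀ z ∈ C, c • z ∈ C) (hs : IsExtremalVec (φ '' C) s)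
    {u v : V} (hu : u ∈ C) (hv : v ∈ C) {α : ℝ} (hα : 0 < α) (h : φ (u + v) = α • s) :
    ∃ a : ℝ, 0 ≤ a ∧ φ u = a • s := by
  have hα' := inv_pos.2 hα
  obtain ⟨⟨a, ha, hau⟩, -⟩ := hs.2.2 _ _ ⟨_, hC _ hα' u hu, map_smul φ _ u⟩
    ⟨_, hC _ hα' v hv, map_smul φ _ v⟩ (by rw [← smul_add, ← map_add, h, inv_smul_smul₀ hα.ne'])
  exact ⟨α * a, mul_nonneg hα.le ha, by rw [mul_smul, ← hau, smul_inv_smul₀ hα.ne']⟩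

theorem isExtremalVec_of_supporting_functional
    (hC : ∀ c : ℝ, 0 < c → ∀ z ∈ C, c • z ∈ C) (hs : IsExtremalVec (φ '' C) s)
    (L : V →ₗ[ℝ] ℝ) (hinj : ∀ w, φ w = 0 → L w = 0 → w = 0)
    (hL : ∀ y ∈ C, ∀ a : ℝ, 0 ≤ a → φ y = a • s → 0 ≤ L y)
    {r' : V} (hr' : r' ∈ C) {t : ℝ} (ht : 0 < t) (hφr' : φ r' = t • s) (hLr' : L r' = 0) :
    IsExtremalVec C r' := by
  have key : ∀ u v, u ∈ C → v ∈ C → r' = u + v → ∃ a : ℝ, 0 ≤ a ∧ u = a • r' := by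
    intro u v hu hv huv
    obtain ⟨a, ha, hφu⟩ := hs.exists_nonneg_smul_of_map_add hC hu hv ht (by rw [← huv, hφr'])
    obtain ⟨b, hb, hφv⟩ :=
      hs.exists_nonneg_smul_of_map_add hC hv hu ht (by rw [add_comm, ← huv, hφr'])
    have hLu : L u = 0 := by
      have hsum : L u + L v = 0 := by rw [← map_add, ← huv, hLr']
      linarith [hL u hu a ha hφu, hL v hv b hb hφv]
    refine ⟨a / t, div_nonneg ha ht.le, sub_eq_zero.1 (hinj _ ?_ ?_)⟩
    · rw [map_sub, map_smul, hφr', hφu, smul_smul, div_mul_cancel₀ _ ht.ne', sub_self]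
    · rw [map_sub, map_smul, hLu, hLr', smul_zero, sub_self]
  refine ⟨?_, hr', fun u v hu hv huv =>
    ⟨key u v hu hv huv, key v u hv hu (huv.trans (add_comm u v))⟩⟩
  rintro rfl
  exact hs.1 ((smul_eq_zero.1 (hφr'.symm.trans (map_zero φ))).resolve_left ht.ne')

variable {S : Set V}

theorem IsExtremalVec.mem_coneGen_of_map_eq_smul (hs : IsExtremalVec (φ '' coneGen S) s)
    {y : V} (hy : y ∈ coneGen S) {α : ℝ} (hα : 0 < α) (hφy : φ y = α • s) :
    y ∈ coneGen {v ∈ S | ∃ a : ℝ, 0 ≤ a ∧ φ v = a • s} := by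
  obtain ⟨m, c, v, hc, hv, rfl⟩ := hy
  refine sum_mem_coneGen fun i _ => ?_
  rcases (hc i).eq_or_lt with hci | hci
  · rw [← hci, zero_smul]
    exact zero_mem_coneGen
  have hrest : ∑ j ∈ univ.erase i, c j • v j ∈ coneGen S :=
    sum_mem_coneGen fun j _ => smul_mem_coneGen (hc j) (subset_coneGen (hv j))
  obtain ⟨a, ha, hai⟩ := hs.exists_nonneg_smul_of_map_add
    (fun _ hc _ hz => smul_mem_coneGen hc.le hz)
    (smul_mem_coneGen (hc i) (subset_coneGen (hv i))) hrest hα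
    (by rw [Finset.add_sum_erase univ (fun j => c j • v j) (mem_univ i), hφy])
  refine smul_mem_coneGen (hc i) (subset_coneGen ⟨hv i, a / c i, div_nonneg ha (hc i), ?_⟩)
  rw [div_eq_inv_mul, mul_smul, ← hai, map_smul, inv_smul_smul₀ hci.ne']

theorem IsExtremalVec.exists_mem_map_eq_smul (hs : IsExtremalVec (φ '' coneGen S) s) :
    ∃ v ∈ S, ∃ a : ℝ, 0 < a ∧ φ v = a • s := by
  by_contra! h
  obtain ⟨x, hx, hφx⟩ := hs.2.1
  have hxT := hs.mem_coneGen_of_map_eq_smul hx one_pos (by rw [hφx, one_smul])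
  have hT : {v ∈ S | ∃ a : ℝ, 0 ≤ a ∧ φ v = a • s} ⊆ LinearMap.ker φ := by
    rintro v ⟨hvS, a, ha, hφv⟩
    rcases ha.eq_or_lt with rfl | ha
    · simpa using hφv
    · exact absurd hφv (h v hvS a ha)
  exact hs.1 (hφx ▸ Submodule.span_le.2 hT (coneGen_subset_span hxT))

theorem IsExtremalVec.nonneg_of_map_eq_smul (hs : IsExtremalVec (φ '' coneGen S) s)
    (L : V →ₗ[ℝ] ℝ) (hL₀ : ∀ y ∈ coneGen S, φ y = 0 → 0 ≤ L y)
    (hLS : ∀ v ∈ S, ∀ a : ℝ, 0 < a → φ v = a • s → 0 ≤ L v)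
    {y : V} (hy : y ∈ coneGen S) {a : ℝ} (ha : 0 ≤ a) (hφy : φ y = a • s) : 0 ≤ L y := by
  rcases ha.eq_or_lt with rfl | ha
  · exact hL₀ y hy (by rw [hφy, zero_smul])
  refine nonneg_of_mem_coneGen L ?_ (hs.mem_coneGen_of_map_eq_smul hy ha hφy)
  rintro v ⟨hvS, b, hb, hφv⟩
  rcases hb.eq_or_lt with rfl | hb
  · exact hL₀ v (subset_coneGen hvS) (by rw [hφv, zero_smul])
  · exact hLS v hvS b hb hφv

theorem IsExtremalVec.exists_mem_map_eq_smul_forall_div_le (hS : S.Finite)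
    (hs : IsExtremalVec (φ '' coneGen S) s) (ℓ : V →ₗ[ℝ] ℝ) :
    ∃ r' ∈ S, ∃ t : ℝ, 0 < t ∧ φ r' = t • s ∧
      ∀ v ∈ S, ∀ a : ℝ, 0 < a → φ v = a • s → ℓ r' / t ≤ ℓ v / a := by
  obtain ⟨ν, hν⟩ := Module.Projective.exists_dual_eq_one ℝ hs.1
  have hνφ : ∀ v (a : ℝ), φ v = a • s → ν (φ v) = a := fun v a h => by
    rw [h, map_smul, hν, smul_eq_mul, mul_one]
  obtain ⟨r', ⟨hr'S, t, ht, hφr'⟩, hmin⟩ :=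
    Set.exists_min_image {v ∈ S | ∃ a : ℝ, 0 < a ∧ φ v = a • s} (fun v => ℓ v / ν (φ v))
      (hS.subset (Set.sep_subset _ _)) hs.exists_mem_map_eq_smul
  refine ⟨r', hr'S, t, ht, hφr', fun v hv a ha hφv => ?_⟩
  simpa only [hνφ _ _ hφr', hνφ _ _ hφv] using hmin v ⟨hv, a, ha, hφv⟩

theorem exists_isExtremalVec_map_eq_smul (hS : S.Finite) (hsal : IsSalient (coneGen S))
    {r : V} (hr0 : r ≠ 0) (hr : r ∈ coneGen S) (hker : LinearMap.ker φ = Submodule.span ℝ {r})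
    (hs : IsExtremalVec (φ '' coneGen S) s) :
    ∃ r', IsExtremalVec (coneGen S) r' ∧ ∃ t : ℝ, 0 < t ∧ φ r' = t • s := by
  have hC : ∀ c : ℝ, 0 < c → ∀ z ∈ coneGen S, c • z ∈ coneGen S :=
    fun c hc _ hz => smul_mem_coneGen hc.le hz
  have hφr : φ r = 0 := LinearMap.mem_ker.1 (hker ▸ Submodule.mem_span_singleton_self r)
  have hkerC : ∀ y, φ y = 0 → ∃ c : ℝ, y = c • r := fun y hy =>
    (Submodule.mem_span_singleton.1 (hker ▸ hy : y ∈ Submodule.span ℝ {r})).imp fun _ h => h.symm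
  obtain ⟨ℓ, hℓ⟩ := Module.Projective.exists_dual_eq_one ℝ hr0
  obtain ⟨ν, hν⟩ := Module.Projective.exists_dual_eq_one ℝ hs.1
  obtain ⟨r', hr'S, t, ht, hφr', hmin⟩ := hs.exists_mem_map_eq_smul_forall_div_le hS ℓ
  set L := ℓ - (ℓ r' / t) • (ν ∘ₗ φ)
  have hL : ∀ v (a : ℝ), φ v = a • s → L v = ℓ v - ℓ r' / t * a := fun v a h => by
    simp [L, h, hν]
  have hLr : ∀ c : ℝ, L (c • r) = c := fun c => by
    simpa [hℓ] using hL (c • r) 0 (by rw [map_smul, hφr, smul_zero, zero_smul])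
  refine ⟨r', isExtremalVec_of_supporting_functional hC hs L ?_ ?_ (subset_coneGen hr'S) ht hφr'
    (by rw [hL r' t hφr', div_mul_cancel₀ _ ht.ne', sub_self]), t, ht, hφr'⟩
  · intro w hφw hLw
    obtain ⟨c, rfl⟩ := hkerC w hφw
    rw [hLr] at hLw
    rw [hLw, zero_smul]
  · refine fun y hy a ha hφy => hs.nonneg_of_map_eq_smul L (fun y hy hφy => ?_)
      (fun v hv a ha hφv => ?_) hy ha hφy
    · obtain ⟨c, rfl⟩ := hkerC y hφy
      rw [hLr]
      exact hsal.nonneg_of_smul_mem hC hr0 hr hy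
    · rw [hL v a hφv, sub_nonneg, ← le_div_iff₀ ha]
      exact hmin v hv a ha hφv

end Projection

theorem edge_of_image_comes_from_extremal_ray_general {n : ℕ}
    (C : Set (Fin (n + 1) → ℝ)) (S : Set (Fin (n + 1) → ℝ)) (hS : S.Finite)
    (hC : C = coneGen S) (hsal : IsSalient C)
    (r : Fin (n + 1) → ℝ) (hr : IsExtremalVec C r)
    (φ : (Fin (n + 1) → ℝ) →ₗ[ℝ] (Fin n → ℝ))
    (hker : LinearMap.ker φ = Submodule.span ℝ {r})
    (s : Fin n → ℝ) (hse : IsExtremalVec (φ '' C) s) :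
    ∃ r', r' ∈ C ∧ IsExtremalVec C r' ∧ (∀ c : ℝ, r' ≠ c • r) ∧
      ∃ t : ℝ, 0 < t ∧ φ r' = t • s := by
  subst hC
  obtain ⟨r', hr', t, ht, hφr'⟩ :=
    exists_isExtremalVec_map_eq_smul hS hsal hr.1 hr.2.1 hker hse
  refine ⟨r', hr'.2.1, hr', fun c hc => hse.1 ?_, t, ht, hφr'⟩
  have hφr : φ r = 0 := LinearMap.mem_ker.1 (hker ▸ Submodule.mem_span_singleton_self r)
  rw [← smul_eq_zero_iff_right ht.ne', ← hφr', hc, map_smul, hφr, smul_zero]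

theorem edge_of_image_comes_from_extremal_ray {n : ℕ}
    (C : Set (Fin (n + 1) → ℝ)) (S : Set (Fin (n + 1) → ℝ)) (hS : S.Finite)
    (hC : C = coneGen S) (hsal : IsSalient C)
    (r : Fin (n + 1) → ℝ) (hr : IsExtremalVec C r)
    (φ : (Fin (n + 1) → ℝ) →ₗ[ℝ] (Fin n → ℝ))
    (hsurj : Function.Surjective φ)
    (hker : LinearMap.ker φ = Submodule.span ℝ {r})
    (s : Fin n → ℝ) (hs : s ≠ 0) (hse : IsExtremalVec (φ '' C) s) :
    ∃ r', r' ∈ C ∧ IsExtremalVec C r' ∧ (∀ c : ℝ, r' ≠ c • r) ∧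
      ∃ t : ℝ, 0 < t ∧ φ r' = t • s :=
  edge_of_image_comes_from_extremal_ray_general C S hS hC hsal r hr φ hker s hse
end

section
/- In the setting where C ⊆ ℝ^n is a salient polyhedral cone, r spans an extremal ray of C, φ : ℝ^n → ℝ^{n−1} is surjective linear with kernel the span of r, and s spans an extremal ray of φ(C): if r' and r'' both span extremal rays of C, neither is a multiple of r, and φ(r') and φ(r'') are both positive multiples of s, then r'' is a positive multiple of r'. -/
/-!
Since `φ r'` and `φ r''` lie on the same ray, `t' • r'' - t'' • r'` lies in `ker φ = ℝ ∙ r`, say it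
equals `c • r`. If `c ≥ 0`, extremality of `r''` applied to `t' • r'' = t'' • r' + c • r` puts `r'`
on the ray of `r''`. If `c < 0`, extremality of `r'` applied to `t'' • r' = (-c) • r + t' • r''`
puts `r` on the ray of `r'`, which is excluded.
-/

open Finset

lemma smul_mem_coneGen_s3 {V : Type*} [AddCommGroup V] [Module ℝ V] {S : Set V} {x : V}
    (hx : x ∈ coneGen S) {a : ℝ} (ha : 0 ≤ a) : a • x ∈ coneGen S := by
  obtain ⟨m, c, v, hc, hv, rfl⟩ := hx
  refine ⟨m, fun i => a * c i, v, fun i => mul_nonneg ha (hc i), hv, ?_⟩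
  simp only [Finset.smul_sum, mul_smul]

lemma LinearMap.exists_smul_eq_smul_add_of_ker_le_span {R V W : Type*} [CommRing R]
    [AddCommGroup V] [Module R V] [AddCommGroup W] [Module R W] {φ : V →ₗ[R] W} {r : V}
    (hker : LinearMap.ker φ ≤ Submodule.span R {r}) {s : W} {x y : V} {t u : R}
    (hx : φ x = t • s) (hy : φ y = u • s) : ∃ c : R, t • y = u • x + c • r := by
  have hmem : t • y - u • x ∈ LinearMap.ker φ := by
    rw [LinearMap.mem_ker, map_sub, map_smul, map_smul, hx, hy, smul_smul, smul_smul, mul_comm,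
      sub_self]
  obtain ⟨c, hc⟩ := Submodule.mem_span_singleton.mp (hker hmem)
  exact ⟨c, by rw [hc, add_sub_cancel]⟩

lemma IsExtremalVec.exists_pos_smul_of_smul_eq_add {V : Type*} [AddCommGroup V] [Module ℝ V]
    {C : Set V} (hC : ∀ z ∈ C, ∀ a : ℝ, 0 ≤ a → a • z ∈ C) {v x y : V} (hv : IsExtremalVec C v)
    (hx : x ∈ C) (hx0 : x ≠ 0) (hy : y ∈ C) {d a c : ℝ} (hd : 0 < d) (ha : 0 < a) (hc : 0 ≤ c)
    (h : d • v = a • x + c • y) : ∃ b : ℝ, 0 < b ∧ x = b • v := by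
  have hv_eq : v = (a / d) • x + (c / d) • y := by
    rw [div_eq_inv_mul, div_eq_inv_mul, mul_smul, mul_smul, ← smul_add, ← h,
      inv_smul_smul₀ hd.ne']
  obtain ⟨⟨b, hb, hxb⟩, -⟩ :=
    hv.2.2 _ _ (hC x hx _ (div_pos ha hd).le) (hC y hy _ (div_nonneg hc hd.le)) hv_eq
  have hb0 : b ≠ 0 := by
    rintro rfl
    rw [zero_smul, smul_eq_zero] at hxb
    exact hx0 (hxb.resolve_left (div_pos ha hd).ne')
  refine ⟨(a / d)⁻¹ * b, mul_pos (inv_pos.mpr (div_pos ha hd)) (hb.lt_of_ne' hb0), ?_⟩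
  rw [mul_smul, ← hxb, inv_smul_smul₀ (div_pos ha hd).ne']

theorem unique_extremal_ray_over_edge_general {n : ℕ}
    (C : Set (Fin (n + 1) → ℝ)) (S : Set (Fin (n + 1) → ℝ)) (hC : C = coneGen S)
    (r : Fin (n + 1) → ℝ) (hr : IsExtremalVec C r)
    (φ : (Fin (n + 1) → ℝ) →ₗ[ℝ] (Fin n → ℝ))
    (hker : LinearMap.ker φ = Submodule.span ℝ {r})
    (s : Fin n → ℝ)
    (r' r'' : Fin (n + 1) → ℝ)
    (hr' : IsExtremalVec C r') (hr'' : IsExtremalVec C r'')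
    (hr'r : ∀ c : ℝ, r' ≠ c • r)
    (t' : ℝ) (ht' : 0 < t') (hφr' : φ r' = t' • s)
    (t'' : ℝ) (ht'' : 0 < t'') (hφr'' : φ r'' = t'' • s) :
    ∃ c : ℝ, 0 < c ∧ r'' = c • r' := by
  have hsmul : ∀ z ∈ C, ∀ a : ℝ, 0 ≤ a → a • z ∈ C := by
    subst hC
    exact fun z hz a ha => smul_mem_coneGen_s3 hz ha
  obtain ⟨c, hc⟩ := LinearMap.exists_smul_eq_smul_add_of_ker_le_span hker.le hφr' hφr''
  rcases le_or_gt 0 c with hc0 | hc0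
  · obtain ⟨b, hb, hr'b⟩ :=
      hr''.exists_pos_smul_of_smul_eq_add hsmul hr'.2.1 hr'.1 hr.2.1 ht' ht'' hc0 hc
    exact ⟨b⁻¹, inv_pos.mpr hb, by rw [hr'b, inv_smul_smul₀ hb.ne']⟩
  · have hc' : t'' • r' = (-c) • r + t' • r'' := by
      rw [hc]; module
    obtain ⟨b, hb, hrb⟩ :=
      hr'.exists_pos_smul_of_smul_eq_add hsmul hr.2.1 hr.1 hr''.2.1 ht'' (neg_pos.mpr hc0) ht'.le hc'
    exact absurd (by rw [hrb, inv_smul_smul₀ hb.ne']) (hr'r b⁻¹)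

theorem unique_extremal_ray_over_edge {n : ℕ}
    (C : Set (Fin (n + 1) → ℝ)) (S : Set (Fin (n + 1) → ℝ)) (hS : S.Finite)
    (hC : C = coneGen S) (hsal : IsSalient C)
    (r : Fin (n + 1) → ℝ) (hr : IsExtremalVec C r)
    (φ : (Fin (n + 1) → ℝ) →ₗ[ℝ] (Fin n → ℝ))
    (hsurj : Function.Surjective φ)
    (hker : LinearMap.ker φ = Submodule.span ℝ {r})
    (s : Fin n → ℝ) (hs : IsExtremalVec (φ '' C) s)
    (r' r'' : Fin (n + 1) → ℝ)
    (hr' : IsExtremalVec C r') (hr'' : IsExtremalVec C r'')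
    (hr'r : ∀ c : ℝ, r' ≠ c • r) (hr''r : ∀ c : ℝ, r'' ≠ c • r)
    (t' : ℝ) (ht' : 0 < t') (hφr' : φ r' = t' • s)
    (t'' : ℝ) (ht'' : 0 < t'') (hφr'' : φ r'' = t'' • s) :
    ∃ c : ℝ, 0 < c ∧ r'' = c • r' :=
  unique_extremal_ray_over_edge_general C S hC r hr φ hker s r' r'' hr' hr'' hr'r t' ht' hφr' t''
    ht'' hφr''
end

section
/- Consider the eight vectors in ℝ^5: l₁ = (−1,0,0,1,0), l₂ = (0,−1,0,1,0), l₃ = (0,0,−1,1,0), l₄ = (1,0,0,0,1), l₅ = (0,1,0,0,1), l₆ = (0,0,1,0,1), l₇ = (0,0,0,−1,0), l₈ = (1,1,1,−1,2). Then l₈ does not lie in the convex cone generated by l₁, l₂, l₃, l₄, l₅, l₆, l₇; i.e., l₈ is not a nonnegative linear combination of the other seven vectors. -/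
open Finset

def L8 : Fin 8 → (Fin 5 → ℝ) :=
  ![![-1, 0, 0, 1, 0],
    ![0, -1, 0, 1, 0],
    ![0, 0, -1, 1, 0],
    ![1, 0, 0, 0, 1],
    ![0, 1, 0, 0, 1],
    ![0, 0, 1, 0, 1],
    ![0, 0, 0, -1, 0],
    ![1, 1, 1, -1, 2]]

theorem l8_not_in_cone_of_others :
    ¬ ∃ c : Fin 7 → ℝ, (∀ i, 0 ≤ c i) ∧
      L8 7 = ∑ i : Fin 7, c i • L8 i.castSucc := by
  rintro ⟨c, hc, heq⟩
  have h0 := congrFun heq 0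
  have h1 := congrFun heq 1
  have h2 := congrFun heq 2
  have h4 := congrFun heq 4
  simp only [Fin.sum_univ_seven, Pi.add_apply, Pi.smul_apply, smul_eq_mul,
    show L8 (Fin.castSucc 0) 0 = -1 from rfl,
    show L8 (Fin.castSucc 1) 0 = 0 from rfl,
    show L8 (Fin.castSucc 2) 0 = 0 from rfl,
    show L8 (Fin.castSucc 3) 0 = 1 from rfl,
    show L8 (Fin.castSucc 4) 0 = 0 from rfl,
    show L8 (Fin.castSucc 5) 0 = 0 from rfl,
    show L8 (Fin.castSucc 6) 0 = 0 from rfl,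
    show L8 7 0 = (1:Real) from rfl,
    show L8 (Fin.castSucc 0) 1 = 0 from rfl,
    show L8 (Fin.castSucc 1) 1 = -1 from rfl,
    show L8 (Fin.castSucc 2) 1 = 0 from rfl,
    show L8 (Fin.castSucc 3) 1 = 0 from rfl,
    show L8 (Fin.castSucc 4) 1 = 1 from rfl,
    show L8 (Fin.castSucc 5) 1 = 0 from rfl,
    show L8 (Fin.castSucc 6) 1 = 0 from rfl,
    show L8 7 1 = (1:Real) from rfl,
    show L8 (Fin.castSucc 0) 2 = 0 from rfl,
    show L8 (Fin.castSucc 1) 2 = 0 from rfl,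
    show L8 (Fin.castSucc 2) 2 = -1 from rfl,
    show L8 (Fin.castSucc 3) 2 = 0 from rfl,
    show L8 (Fin.castSucc 4) 2 = 0 from rfl,
    show L8 (Fin.castSucc 5) 2 = 1 from rfl,
    show L8 (Fin.castSucc 6) 2 = 0 from rfl,
    show L8 7 2 = (1:Real) from rfl,
    show L8 (Fin.castSucc 0) 4 = 0 from rfl,
    show L8 (Fin.castSucc 1) 4 = 0 from rfl,
    show L8 (Fin.castSucc 2) 4 = 0 from rfl,
    show L8 (Fin.castSucc 3) 4 = 1 from rfl,
    show L8 (Fin.castSucc 4) 4 = 1 from rfl,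
    show L8 (Fin.castSucc 5) 4 = 1 from rfl,
    show L8 (Fin.castSucc 6) 4 = 0 from rfl,
    show L8 7 4 = (2:Real) from rfl] at h0 h1 h2 h4
  have := hc 0; have := hc 1; have := hc 2; have := hc 3
  have := hc 4; have := hc 5; have := hc 6
  linarith
end

section
/- For the eight vectors in ℝ^5: l₁ = (−1,0,0,1,0), l₂ = (0,−1,0,1,0), l₃ = (0,0,−1,1,0), l₄ = (1,0,0,0,1), l₅ = (0,1,0,0,1), l₆ = (0,0,1,0,1), l₇ = (0,0,0,−1,0), l₈ = (1,1,1,−1,2), each lᵢ spans an extremal ray of the convex cone generated by {l₁,…,l₈}; equivalently, no lᵢ is a nonnegative linear combination of the remaining seven vectors. -/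
/-!
Each generator `lᵢ` is exposed by an integer functional `uᵢ`: `uᵢ ⬝ lᵢ = 0` and `uᵢ ⬝ lⱼ > 0`
for `j ≠ i`. Such a functional is nonnegative on the cone, so in a decomposition `lᵢ = x + y` it
vanishes on `x` and `y`; a nonnegative combination of generators on which it vanishes can only
involve `lᵢ`, whence both extremality and the fact that `lᵢ` is not a nonnegative combination of
the other generators.
-/

open Finset

open Matrix

section ExposedGenerator

variable {V : Type*} [AddCommGroup V] [Module ℝ V]

lemma mem_coneGen_of_mem {S : Set V} {v : V} (hv : v ∈ S) : v ∈ coneGen S :=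
  ⟨1, fun _ => 1, fun _ => v, fun _ => zero_le_one, fun _ => hv, by simp⟩

lemma eq_zero_or_apply_eq_zero_of_apply_sum_eq_zero {ι : Type*} [Fintype ι] {f : V →ₗ[ℝ] ℝ}
    {c : ι → ℝ} {w : ι → V} (hc : ∀ m, 0 ≤ c m) (hf : ∀ m, 0 ≤ f (w m))
    (hsum : f (∑ m, c m • w m) = 0) (m : ι) : c m = 0 ∨ f (w m) = 0 := by
  simp only [map_sum, map_smul, smul_eq_mul] at hsum
  exact mul_eq_zero.mp <|
    (sum_eq_zero_iff_of_nonneg fun m _ => mul_nonneg (hc m) (hf m)).mp hsum m (mem_univ m)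

lemma apply_nonneg_of_mem_coneGen {S : Set V} {f : V →ₗ[ℝ] ℝ} (hS : ∀ s ∈ S, 0 ≤ f s) {x : V}
    (hx : x ∈ coneGen S) : 0 ≤ f x := by
  obtain ⟨n, c, w, hc, hw, rfl⟩ := hx
  simp only [map_sum, map_smul, smul_eq_mul]
  exact sum_nonneg fun m _ => mul_nonneg (hc m) (hS _ (hw m))

lemma exists_nonneg_smul_of_mem_coneGen_of_apply_eq_zero {S : Set V} {f : V →ₗ[ℝ] ℝ} {v x : V}
    (hS : ∀ s ∈ S, 0 ≤ f s) (hker : ∀ s ∈ S, f s = 0 → s = v) (hx : x ∈ coneGen S)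
    (hfx : f x = 0) : ∃ a : ℝ, 0 ≤ a ∧ x = a • v := by
  obtain ⟨n, c, w, hc, hw, rfl⟩ := hx
  have hterm (m : Fin n) : c m • w m = c m • v := by
    rcases eq_zero_or_apply_eq_zero_of_apply_sum_eq_zero hc (fun m => hS _ (hw m)) hfx m
      with h | h
    · simp [h]
    · rw [hker _ (hw m) h]
  refine ⟨∑ m, c m, sum_nonneg fun m _ => hc m, ?_⟩
  rw [sum_smul]
  exact sum_congr rfl fun m _ => hterm m

theorem isExtremalVec_coneGen_of_exposed {S : Set V} {f : V →ₗ[ℝ] ℝ} {v : V} (hv : v ≠ 0)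
    (hvS : v ∈ S) (hS : ∀ s ∈ S, 0 ≤ f s) (hfv : f v = 0) (hker : ∀ s ∈ S, f s = 0 → s = v) :
    IsExtremalVec (coneGen S) v := by
  refine ⟨hv, mem_coneGen_of_mem hvS, fun x y hx hy hxy => ?_⟩
  have hfx := apply_nonneg_of_mem_coneGen hS hx
  have hfy := apply_nonneg_of_mem_coneGen hS hy
  have hsum : f x + f y = 0 := by rw [← map_add, ← hxy, hfv]
  exact ⟨exists_nonneg_smul_of_mem_coneGen_of_apply_eq_zero hS hker hx (by linarith),
    exists_nonneg_smul_of_mem_coneGen_of_apply_eq_zero hS hker hy (by linarith)⟩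

variable {ι : Type*} {L : ι → V} {f : V →ₗ[ℝ] ℝ} {i : ι}

theorem isExtremalVec_coneGen_range_of_exposed (hLi : L i ≠ 0) (hf : ∀ j, 0 ≤ f (L j))
    (hker : ∀ j, f (L j) = 0 ↔ j = i) : IsExtremalVec (coneGen (Set.range L)) (L i) :=
  isExtremalVec_coneGen_of_exposed hLi ⟨i, rfl⟩ (Set.forall_mem_range.2 hf) ((hker i).2 rfl)
    (Set.forall_mem_range.2 fun j h => by rw [(hker j).1 h])

theorem not_exists_nonneg_combination_of_exposed [Fintype ι] (hLi : L i ≠ 0)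
    (hf : ∀ j, 0 ≤ f (L j)) (hker : ∀ j, f (L j) = 0 ↔ j = i) :
    ¬ ∃ c : ι → ℝ, (∀ j, 0 ≤ c j) ∧ c i = 0 ∧ L i = ∑ j, c j • L j := by
  rintro ⟨c, hc, hci, hLc⟩
  refine hLi (hLc.trans (sum_eq_zero fun j _ => ?_))
  rcases eq_zero_or_apply_eq_zero_of_apply_sum_eq_zero hc hf (hLc ▸ (hker i).2 rfl) j with h | h
  · simp [h]
  · simp [(hker j).1 h, hci]

end ExposedGenerator

def exposingFunctional : Fin 8 → Fin 5 → ℝ :=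
  ![![-1, -2, -2, -1, 3],
    ![-2, -1, -2, -1, 3],
    ![-2, -2, -1, -1, 3],
    ![-4, -2, -2, -1, 4],
    ![-2, -4, -2, -1, 4],
    ![-2, -2, -4, -1, 4],
    ![-1, -1, -1, 0, 2],
    ![-3, -3, -3, -1, 4]]

def exposingPairing : Fin 8 → Fin 8 → ℕ :=
  ![![0, 1, 1, 2, 1, 1, 1, 2],
    ![1, 0, 1, 1, 2, 1, 1, 2],
    ![1, 1, 0, 1, 1, 2, 1, 2],
    ![3, 1, 1, 0, 2, 2, 1, 1],
    ![1, 3, 1, 2, 0, 2, 1, 1],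
    ![1, 1, 3, 2, 2, 0, 1, 1],
    ![1, 1, 1, 1, 1, 1, 0, 1],
    ![2, 2, 2, 1, 1, 1, 1, 0]]

lemma exposingFunctional_dotProduct_L8 (i j : Fin 8) :
    exposingFunctional i ⬝ᵥ L8 j = exposingPairing i j := by
  fin_cases i <;> fin_cases j <;>
    norm_num [exposingFunctional, exposingPairing, L8, dotProduct, Fin.sum_univ_five,
      cons_val_two, cons_val_three, cons_val_four]

lemma exposingPairing_eq_zero_iff : ∀ i j : Fin 8, exposingPairing i j = 0 ↔ j = i := by
  decide

lemma L8_ne_zero (i : Fin 8) : L8 i ≠ 0 := by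
  intro h
  have hpair := exposingFunctional_dotProduct_L8 (i + 1) i
  rw [h, dotProduct_zero, eq_comm, Nat.cast_eq_zero, exposingPairing_eq_zero_iff] at hpair
  exact (by decide : ∀ k : Fin 8, k ≠ k + 1) i hpair

theorem each_li_is_extremal :
    ∀ i : Fin 8, IsExtremalVec (coneGen (Set.range L8)) (L8 i) ∧
      ¬ ∃ c : Fin 8 → ℝ, (∀ j, 0 ≤ c j) ∧ c i = 0 ∧ L8 i = ∑ j, c j • L8 j := by
  intro i
  let f := dotProductBilin ℝ ℝ (exposingFunctional i)
  have hf (j : Fin 8) : f (L8 j) = exposingPairing i j := exposingFunctional_dotProduct_L8 i j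
  have hnonneg (j : Fin 8) : 0 ≤ f (L8 j) := hf j ▸ Nat.cast_nonneg _
  have hker (j : Fin 8) : f (L8 j) = 0 ↔ j = i := by
    rw [hf, Nat.cast_eq_zero, exposingPairing_eq_zero_iff]
  exact ⟨isExtremalVec_coneGen_range_of_exposed (L8_ne_zero i) hnonneg hker,
    not_exists_nonneg_combination_of_exposed (L8_ne_zero i) hnonneg hker⟩
end

section
/- Let C ⊆ ℝ^n be a salient polyhedral cone, r a spanning vector of an extremal ray of C, and φ : ℝ^n → ℝ^{n−1} surjective linear with kernel spanned by r. Suppose r' spans an extremal ray of C, r' is not a multiple of r, and φ(r') spans an extremal ray of φ(C). Then the set F = C ∩ span{r, r'} is a face of C, i.e., whenever x + y ∈ F with x, y ∈ C, both x and y lie in F. -/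
open Finset

lemma coneGen_smul {V : Type*} [AddCommGroup V] [Module ℝ V] {S : Set V}
    {c : ℝ} (hc : 0 ≤ c) {x : V} (hx : x ∈ coneGen S) : c • x ∈ coneGen S := by
  obtain ⟨m, co, v, h1, h2, h3⟩ := hx
  exact ⟨m, fun i => c * co i, v, fun i => mul_nonneg hc (h1 i), h2, by
    rw [h3, Finset.smul_sum]; simp [mul_smul]⟩

lemma key_lemma {n : ℕ}
    (C : Set (Fin (n + 1) → ℝ)) (S : Set (Fin (n + 1) → ℝ))
    (hC : C = coneGen S) (hsal : IsSalient C)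
    (r : Fin (n + 1) → ℝ) (hr : IsExtremalVec C r)
    (φ : (Fin (n + 1) → ℝ) →ₗ[ℝ] (Fin n → ℝ))
    (hker : LinearMap.ker φ = Submodule.span ℝ {r})
    (r' : Fin (n + 1) → ℝ) (hr' : IsExtremalVec C r')
    (hφr' : IsExtremalVec (φ '' C) (φ r')) :
    ∀ x y, x ∈ C → y ∈ C → x + y ∈ C →
      x + y ∈ (Submodule.span ℝ {r, r'} : Submodule ℝ (Fin (n + 1) → ℝ)) →
      x ∈ (Submodule.span ℝ {r, r'} : Submodule ℝ (Fin (n + 1) → ℝ)) := by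
  intro x y hx hy hxyC hxyS
  have hCs : ∀ c : ℝ, 0 ≤ c → ∀ z ∈ C, c • z ∈ C := by
    intro c hc z hz
    rw [hC] at hz ⊢
    exact coneGen_smul hc hz
  have hrmem : r ∈ (Submodule.span ℝ {r, r'} : Submodule ℝ (Fin (n + 1) → ℝ)) :=
    Submodule.subset_span (by simp)
  have hr'mem : r' ∈ (Submodule.span ℝ {r, r'} : Submodule ℝ (Fin (n + 1) → ℝ)) :=
    Submodule.subset_span (by simp)
  have hφr : φ r = 0 := by
    have : r ∈ LinearMap.ker φ := by
      rw [hker]; exact Submodule.mem_span_singleton_self r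
    exact this
  obtain ⟨a, b, hab⟩ := Submodule.mem_span_pair.mp hxyS
  have himg : φ (x + y) = b • φ r' := by
    rw [← hab]; simp [hφr]
  rcases lt_trichotomy b 0 with hb | hb | hb
  · -- b < 0 : contradiction with extremality of φ r'
    exfalso
    have hb0 : b ≠ 0 := ne_of_lt hb
    have hpos : (0:ℝ) ≤ -1 / b := by
      have : (0:ℝ) < -1 / b := by
        rw [div_pos_iff]; right; constructor <;> linarith
      linarith
    have h2r' : φ ((2:ℝ) • r') ∈ φ '' C :=
      ⟨(2:ℝ) • r', hCs 2 (by norm_num) r' hr'.2.1, rfl⟩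
    have hneg : φ ((-1 / b) • (x + y)) ∈ φ '' C :=
      ⟨(-1 / b) • (x + y), hCs _ hpos _ hxyC, rfl⟩
    have hsum : φ r' = φ ((2:ℝ) • r') + φ ((-1 / b) • (x + y)) := by
      rw [map_smul, map_smul, himg, smul_smul]
      rw [show (-1 / b) * b = -1 by field_simp]
      rw [two_smul, neg_one_smul]
      abel
    obtain ⟨_, a', ha', hneg'⟩ := hφr'.2.2 _ _ h2r' hneg hsum
    have heq : (-1 : ℝ) • φ r' = a' • φ r' := by
      rw [← hneg', map_smul, himg, smul_smul]
      rw [show (-1 / b) * b = -1 by field_simp]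
    have : (a' + 1) • φ r' = 0 := by
      have := heq.symm
      rw [add_smul, one_smul, this, neg_one_smul]
      abel
    rcases smul_eq_zero.mp this with h | h
    · linarith
    · exact hφr'.1 h
  · -- b = 0 : x + y ∈ ker φ = span {r}
    have hk : x + y ∈ LinearMap.ker φ := by
      rw [LinearMap.mem_ker, himg, hb, zero_smul]
    rw [hker] at hk
    obtain ⟨c, hc⟩ := Submodule.mem_span_singleton.mp hk
    rcases lt_trichotomy c 0 with hcn | hcz | hcp
    · exfalso
      have h1 : (-c) • r ∈ C := hCs (-c) (by linarith) r hr.2.1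
      have h2 : -((-c) • r) ∈ C := by
        rw [neg_smul, neg_neg, hc]; exact hxyC
      have h3 := hsal _ h1 h2
      rcases smul_eq_zero.mp h3 with h | h
      · linarith
      · exact hr.1 h
    · -- c = 0 : x + y = 0, salient forces x = 0
      have hx0 : x = 0 := by
        apply hsal x hx
        have h0 : x + y = 0 := by rw [← hc, hcz, zero_smul]
        have : -x = y := neg_eq_of_add_eq_zero_right h0
        rw [this]; exact hy
      rw [hx0]; exact Submodule.zero_mem _
    · -- c > 0 : r = (1/c)•x + (1/c)•y, use extremality of r
      have hc0 : c ≠ 0 := ne_of_gt hcp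
      have hpos : (0:ℝ) ≤ 1 / c := by positivity
      have h1 : (1 / c) • x ∈ C := hCs _ hpos x hx
      have h2 : (1 / c) • y ∈ C := hCs _ hpos y hy
      have hsum : r = (1 / c) • x + (1 / c) • y := by
        rw [← smul_add, ← hc, smul_smul]
        rw [show (1 / c) * c = 1 by field_simp, one_smul]
      obtain ⟨⟨a', _, hx'⟩, _⟩ := hr.2.2 _ _ h1 h2 hsum
      have : x = (a' * c) • r := by
        have := congrArg (fun z => c • z) hx'
        simp only [smul_smul] at this
        rw [show c * (1 / c) = 1 by field_simp, one_smul] at this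
        rw [this, mul_comm]
      rw [this]
      exact Submodule.smul_mem _ _ hrmem
  · -- b > 0
    have hb0 : b ≠ 0 := ne_of_gt hb
    have hpos : (0:ℝ) ≤ 1 / b := by positivity
    have h1 : φ ((1 / b) • x) ∈ φ '' C := ⟨_, hCs _ hpos x hx, rfl⟩
    have h2 : φ ((1 / b) • y) ∈ φ '' C := ⟨_, hCs _ hpos y hy, rfl⟩
    have hsum : φ r' = φ ((1 / b) • x) + φ ((1 / b) • y) := by
      rw [map_smul, map_smul, ← smul_add, ← map_add, himg, smul_smul]
      rw [show (1 / b) * b = 1 by field_simp, one_smul]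
    obtain ⟨⟨a', _, hx'⟩, _⟩ := hφr'.2.2 _ _ h1 h2 hsum
    have hφx : φ (x - (a' * b) • r') = 0 := by
      have := congrArg (fun z => b • z) hx'
      simp only [map_smul, smul_smul] at this
      rw [show b * (1 / b) = 1 by field_simp, one_smul] at this
      rw [map_sub, map_smul, this, mul_comm a' b, mul_smul]
      abel
    have hkmem : x - (a' * b) • r' ∈ LinearMap.ker φ := hφx
    rw [hker] at hkmem
    have hsub : x - (a' * b) • r' ∈ (Submodule.span ℝ {r, r'} : Submodule ℝ (Fin (n + 1) → ℝ)) := by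
      refine Submodule.span_mono ?_ hkmem
      intro z hz; simp at hz; simp [hz]
    have := Submodule.add_mem _ hsub (Submodule.smul_mem _ (a' * b) hr'mem)
    simpa using this

theorem span_two_extremal_rays_is_face {n : ℕ}
    (C : Set (Fin (n + 1) → ℝ)) (S : Set (Fin (n + 1) → ℝ)) (hS : S.Finite)
    (hC : C = coneGen S) (hsal : IsSalient C)
    (r : Fin (n + 1) → ℝ) (hr : IsExtremalVec C r)
    (φ : (Fin (n + 1) → ℝ) →ₗ[ℝ] (Fin n → ℝ))
    (hsurj : Function.Surjective φ)
    (hker : LinearMap.ker φ = Submodule.span ℝ {r})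
    (r' : Fin (n + 1) → ℝ) (hr' : IsExtremalVec C r')
    (hr'r : ∀ c : ℝ, r' ≠ c • r)
    (hφr' : IsExtremalVec (φ '' C) (φ r')) :
    ∀ x y, x ∈ C → y ∈ C →
      x + y ∈ C ∩ (Submodule.span ℝ {r, r'} : Submodule ℝ (Fin (n + 1) → ℝ)) →
      x ∈ C ∩ (Submodule.span ℝ {r, r'} : Submodule ℝ (Fin (n + 1) → ℝ)) ∧
      y ∈ C ∩ (Submodule.span ℝ {r, r'} : Submodule ℝ (Fin (n + 1) → ℝ)) := by
  intro x y hx hy hxy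
  obtain ⟨hxyC, hxyS⟩ := hxy
  refine ⟨⟨hx, ?_⟩, ⟨hy, ?_⟩⟩
  · exact key_lemma C S hC hsal r hr φ hker r' hr' hφr' x y hx hy hxyC hxyS
  · exact key_lemma C S hC hsal r hr φ hker r' hr' hφr' y x hy hx
      (by rw [add_comm y x]; exact hxyC) (by rw [add_comm y x]; exact hxyS)
end

section
/- Let C ⊆ ℝ^n be a full-dimensional salient polyhedral cone with set of extremal rays R, and for r ∈ R let φ_r denote the quotient map ℝ^n → ℝ^n/span(r). If L ⊆ R satisfies: for every r ∈ L and every extremal ray s of the polyhedral cone φ_r(C) there exists r' ∈ L with φ_r(r') = s, and L is nonempty, then L = R. -/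
open Finset

/-!
Fix a linear form `l` positive on `C \ {0}` and, for an extremal ray `v`, a form `h ≤ 0` on `C`
vanishing on `C` exactly along the ray of `v`. Pick `r ∈ L` maximising `h / l` (only finitely many
values occur). By Minkowski's theorem in `C / ℝr`, whose extremal rays all lift to `L`, every
point of `C` lies in `cone L + ℝr`. Writing `v = y + αr` gives `0 = h v ≤ (h r / l r) · l v`, so
`h r ≥ 0`, which puts `r` on the ray of `v`.
-/

open PointedCone

section Cone

variable {V : Type*} [AddCommGroup V] [Module ℝ V]

theorem coneGen_eq_hull (S : Set V) : coneGen S = hull ℝ S := by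
  ext x
  rw [SetLike.mem_coe, Submodule.mem_span_set']
  constructor
  · rintro ⟨n, c, v, hc, hv, rfl⟩
    exact ⟨n, fun i => ⟨c i, hc i⟩, fun i => ⟨v i, hv i⟩, rfl⟩
  · rintro ⟨n, c, v, rfl⟩
    exact ⟨n, fun i => c i, fun i => v i, fun i => (c i).2, fun i => (v i).2, rfl⟩

theorem image_hull {W : Type*} [AddCommGroup W] [Module ℝ W] (f : V →ₗ[ℝ] W) (S : Set V) :
    f '' hull ℝ S = hull ℝ (f '' S) := by
  simpa using congrArg SetLike.coe
    (Submodule.span_image (f.restrictScalars {c : ℝ // 0 ≤ c}) (s := S)).symm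

theorem nonneg_of_mem_hull {S : Set V} {l : V →ₗ[ℝ] ℝ} (hl : ∀ s ∈ S, 0 ≤ l s) {x : V}
    (hx : x ∈ hull ℝ S) : 0 ≤ l x :=
  (mem_positive ℝ ℝ).1 (mem_comap.1 ((Submodule.span_le (p := (positive ℝ ℝ).comap l)).2
    (fun s hs => (mem_positive ℝ ℝ).2 (hl s hs)) hx))

theorem pos_of_mem_hull {S : Set V} {l : V →ₗ[ℝ] ℝ} (hl : ∀ s ∈ S, s ≠ 0 → 0 < l s) {x : V}
    (hx : x ∈ hull ℝ S) (hx0 : x ≠ 0) : 0 < l x := by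
  suffices x = 0 ∨ 0 < l x from this.resolve_left hx0
  clear hx0
  induction hx using Submodule.span_induction with
  | mem s hs => exact or_iff_not_imp_left.2 (hl s hs)
  | zero => exact .inl rfl
  | add x y _ _ hx hy =>
    rcases hx with rfl | hx <;> rcases hy with rfl | hy
    all_goals simp_all [add_pos]
  | smul c x _ hx =>
    obtain ⟨c, hc⟩ := c
    rw [Nonneg.mk_smul, map_smul, smul_eq_mul, smul_eq_zero]
    rcases hc.eq_or_lt with rfl | hc
    · exact .inl (.inl rfl)
    · exact hx.imp .inr (mul_pos hc)

theorem IsSalient.convex_sdiff_zero {C : PointedCone ℝ V} (hC : IsSalient (C : Set V)) :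
    Convex ℝ ((C : Set V) \ {0}) := by
  refine convex_iff_forall_pos.2 fun x ⟨hx, hx0⟩ y ⟨hy, _⟩ a b ha hb _ => ⟨?_, fun h => ?_⟩
  · exact C.add_mem (C.smul_mem ha.le hx) (C.smul_mem hb.le hy)
  · have hax : a • x = 0 :=
      hC _ (C.smul_mem ha.le hx) (by rw [neg_eq_of_add_eq_zero_right h]; exact C.smul_mem hb.le hy)
    exact hx0 ((smul_eq_zero.1 hax).resolve_left ha.ne')

theorem IsExtremalVec.exists_pos_smul_mem {C : PointedCone ℝ V} {T : Set V} (hTC : hull ℝ T ≤ C)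
    {v : V} (hv : IsExtremalVec (C : Set V) v) (hvT : v ∈ hull ℝ T) :
    ∃ q ∈ T, ∃ u : ℝ, 0 < u ∧ q = u • v := by
  suffices key : ∀ x ∈ hull ℝ T, ∀ a : ℝ, 0 < a → x = a • v → ∃ q ∈ T, ∃ u : ℝ, 0 < u ∧ q = u • v
    from key v hvT 1 one_pos (one_smul ℝ v).symm
  intro x hx
  induction hx using Submodule.span_induction with
  | mem q hq => exact fun a ha hqa => ⟨q, hq, a, ha, hqa⟩
  | zero => exact fun a ha h0 => absurd ((smul_eq_zero.1 h0.symm).resolve_left ha.ne') hv.1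
  | add x y hx hy ihx ihy =>
    intro a ha hxy
    have hsplit : v = a⁻¹ • x + a⁻¹ • y := by rw [← smul_add, hxy, inv_smul_smul₀ ha.ne']
    obtain ⟨⟨b, hb, hxb⟩, -⟩ := hv.2.2 _ _ (C.smul_mem (inv_nonneg.2 ha.le) (hTC hx))
      (C.smul_mem (inv_nonneg.2 ha.le) (hTC hy)) hsplit
    rcases hb.eq_or_lt with rfl | hb
    · refine ihy a ha ?_
      rw [zero_smul, smul_eq_zero_iff_right (inv_ne_zero ha.ne')] at hxb
      rwa [hxb, zero_add] at hxy
    · exact ihx (a * b) (mul_pos ha hb) (by rw [mul_smul, ← hxb, smul_inv_smul₀ ha.ne'])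
  | smul c x hx ih =>
    obtain ⟨c, hc⟩ := c
    intro a ha hcx
    rw [Nonneg.mk_smul] at hcx
    have hc0 : c ≠ 0 := by
      rintro rfl
      exact hv.1 ((smul_eq_zero.1 (hcx.symm.trans (zero_smul ℝ x))).resolve_left ha.ne')
    exact ih (c⁻¹ * a) (mul_pos (inv_pos.2 (hc.lt_of_ne' hc0)) ha)
      (by rw [mul_smul, ← hcx, inv_smul_smul₀ hc0])

theorem exists_eq_smul_add_of_mem_hull {T : Set V} {s x : V} (hs : s ∈ T) (hx : x ∈ hull ℝ T) :
    ∃ a : ℝ, 0 ≤ a ∧ ∃ x' ∈ hull ℝ (T \ {s}), x = a • s + x' := by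
  rw [← Set.insert_eq_of_mem hs, ← Set.insert_sdiff_singleton, hull, Submodule.mem_span_insert]
    at hx
  obtain ⟨⟨a, ha⟩, x', hx', rfl⟩ := hx
  exact ⟨a, ha, x', hx', rfl⟩

theorem isExtremalVec_of_notMem_hull_sdiff {T : Set V} (hsal : IsSalient (hull ℝ T : Set V))
    {s : V} (hs : s ∈ T) (hns : s ∉ hull ℝ (T \ {s})) : IsExtremalVec (hull ℝ T : Set V) s := by
  have hsub : hull ℝ (T \ {s}) ≤ hull ℝ T := Submodule.span_mono Set.sdiff_subset
  refine ⟨fun h => hns (h ▸ zero_mem _), subset_hull hs, fun x y hx hy hxy => ?_⟩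
  obtain ⟨a, ha, x', hx', rfl⟩ := exists_eq_smul_add_of_mem_hull hs hx
  obtain ⟨b, hb, y', hy', rfl⟩ := exists_eq_smul_add_of_mem_hull hs hy
  have hrest : x' + y' = (1 - (a + b)) • s := by
    rw [sub_smul, one_smul, add_smul]
    nth_rw 1 [hxy]
    abel
  by_cases h0 : x' + y' = 0
  · have hx0 : x' = 0 :=
      hsal x' (hsub hx') (by rw [neg_eq_of_add_eq_zero_right h0]; exact hsub hy')
    rw [hx0, zero_add] at h0
    exact ⟨⟨a, ha, by rw [hx0, add_zero]⟩, ⟨b, hb, by rw [h0, add_zero]⟩⟩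
  exfalso
  rcases lt_or_ge (a + b) 1 with hab | hab
  · have hpos : 0 < 1 - (a + b) := sub_pos.2 hab
    have hmem := (hull ℝ (T \ {s})).smul_mem (inv_nonneg.2 hpos.le) (add_mem hx' hy')
    rw [hrest, inv_smul_smul₀ hpos.ne'] at hmem
    exact hns hmem
  · refine h0 (hsal _ (hsub (add_mem hx' hy')) ?_)
    rw [hrest, ← neg_smul, neg_sub]
    exact (hull ℝ T).smul_mem (sub_nonneg.2 hab) (subset_hull hs)

theorem hull_le_hull_setOf_isExtremalVec {S : Set V} (hS : S.Finite)
    (hsal : IsSalient (hull ℝ S : Set V)) :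
    hull ℝ S ≤ hull ℝ {w | IsExtremalVec (hull ℝ S : Set V) w} := by
  classical
  obtain ⟨T, hT⟩ := exists_minimal_of_wellFoundedLT
    (fun T : Finset V => hull ℝ (T : Set V) = hull ℝ S) ⟨hS.toFinset, by simp⟩
  rw [← hT.prop] at hsal ⊢
  refine Submodule.span_mono fun s hs => isExtremalVec_of_notMem_hull_sdiff hsal hs fun hns => ?_
  have herase : hull ℝ ((T.erase s : Finset V) : Set V) = hull ℝ S := by
    rw [Finset.coe_erase, ← hT.prop]
    conv_rhs => rw [← Set.insert_eq_of_mem hs, ← Set.insert_sdiff_singleton]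
    exact (Submodule.span_insert_eq_span hns).symm
  exact (Finset.erase_ssubset hs).ne (hT.eq_of_le herase (Finset.erase_subset s T))

theorem isSalient_image_mkQ {C : PointedCone ℝ V} (hC : IsSalient (C : Set V)) {r : V}
    (hr : IsExtremalVec (C : Set V) r) : IsSalient ((Submodule.span ℝ {r}).mkQ '' C) := by
  rintro _ ⟨x, hx, rfl⟩ ⟨y, hy, hyx⟩
  rw [Submodule.mkQ_apply, Submodule.Quotient.mk_eq_zero]
  have hxy : x + y ∈ Submodule.span ℝ {r} := by
    rw [← Submodule.Quotient.mk_eq_zero, Submodule.Quotient.mk_add, ← Submodule.mkQ_apply,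
      ← Submodule.mkQ_apply, hyx, add_neg_cancel]
  obtain ⟨γ, hγ⟩ := Submodule.mem_span_singleton.1 hxy
  rcases lt_or_ge 0 γ with hγ0 | hγ0
  · have hsplit : r = γ⁻¹ • x + γ⁻¹ • y := by rw [← smul_add, ← hγ, inv_smul_smul₀ hγ0.ne']
    obtain ⟨⟨a, -, ha⟩, -⟩ := hr.2.2 _ _ (C.smul_mem (inv_nonneg.2 hγ0.le) hx)
      (C.smul_mem (inv_nonneg.2 hγ0.le) hy) hsplit
    exact Submodule.mem_span_singleton.2 ⟨γ * a, by rw [mul_smul, ← ha, smul_inv_smul₀ hγ0.ne']⟩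
  · have h0 : x + y = 0 := hC _ (add_mem hx hy) (by
      rw [← hγ, ← neg_smul]; exact C.smul_mem (neg_nonneg.2 hγ0) hr.2.1)
    rw [hC x hx (by rw [neg_eq_of_add_eq_zero_right h0]; exact hy)]
    exact zero_mem _

theorem exists_mem_hull_add_smul_of_forall_isExtremalVec {S L : Set V} (hS : S.Finite)
    (hsal : IsSalient (hull ℝ S : Set V)) {r : V} (hr : IsExtremalVec (hull ℝ S : Set V) r)
    (hclosed : ∀ s : V ⧸ Submodule.span ℝ {r},
      IsExtremalVec ((Submodule.span ℝ {r}).mkQ '' hull ℝ S) s →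
        ∃ r' ∈ L, ∃ t : ℝ, 0 < t ∧ (Submodule.span ℝ {r}).mkQ r' = t • s)
    {x : V} (hx : x ∈ hull ℝ S) : ∃ y ∈ hull ℝ L, ∃ α : ℝ, x = y + α • r := by
  set φ := (Submodule.span ℝ {r}).mkQ
  have himage : φ '' hull ℝ S = hull ℝ (φ '' S) := image_hull φ S
  have hmink := hull_le_hull_setOf_isExtremalVec (hS.image φ)
    (himage ▸ isSalient_image_mkQ hsal hr)
  rw [← himage] at hmink
  have hext : hull ℝ {w | IsExtremalVec (φ '' hull ℝ S) w} ≤ hull ℝ (φ '' L) :=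
    Submodule.span_le.2 fun s hs => by
      obtain ⟨r', hr'L, t, ht, hr't⟩ := hclosed s hs
      rw [SetLike.mem_coe, ← inv_smul_smul₀ ht.ne' s, ← hr't]
      exact (hull ℝ _).smul_mem (inv_nonneg.2 ht.le) (subset_hull ⟨r', hr'L, rfl⟩)
  obtain ⟨y, hy, hxy⟩ : φ x ∈ φ '' hull ℝ L := by
    rw [image_hull]
    refine hext (hmink ?_)
    rw [← SetLike.mem_coe, ← himage]
    exact ⟨x, hx, rfl⟩
  obtain ⟨α, hα⟩ := Submodule.mem_span_singleton.1 ((Submodule.Quotient.eq _).1 hxy.symm)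
  exact ⟨y, hy, α, by rw [hα]; abel⟩

theorem exists_forall_div_le {S L : Set V} (hS : S.Finite)
    (hL : ∀ w ∈ L, IsExtremalVec (hull ℝ S : Set V) w) (hne : L.Nonempty) (h l : V →ₗ[ℝ] ℝ) :
    ∃ r ∈ L, ∀ w ∈ L, h w / l w ≤ h r / l r := by
  set ρ : V → ℝ := fun w => h w / l w
  have hfin : (ρ '' L).Finite := (hS.image ρ).subset <| by
    rintro _ ⟨w, hw, rfl⟩
    obtain ⟨q, hq, u, hu, rfl⟩ := (hL w hw).exists_pos_smul_mem le_rfl (hL w hw).2.1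
    exact ⟨_, hq, by simp only [ρ, map_smul, smul_eq_mul, mul_div_mul_left _ _ hu.ne']⟩
  obtain ⟨_, ⟨r, hr, rfl⟩, hmax⟩ := Set.exists_max_image (ρ '' L) id hfin (hne.image ρ)
  exact ⟨r, hr, fun w hw => hmax _ ⟨w, hw, rfl⟩⟩

end Cone

section Functional

variable {W : Type*} [NormedAddCommGroup W] [NormedSpace ℝ W]

theorem exists_lt_of_notMem_convexHull {T : Set W} (hT : T.Finite) {x : W}
    (hx : x ∉ convexHull ℝ T) : ∃ f : StrongDual ℝ W, ∀ t ∈ T, f t < f x := by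
  obtain ⟨f, u, hf, hu⟩ := geometric_hahn_banach_closed_point (convex_convexHull ℝ T)
    (hT.isCompact_convexHull (𝕜 := ℝ)).isClosed hx
  exact ⟨f, fun t ht => (hf t (subset_convexHull ℝ T ht)).trans hu⟩

theorem exists_pos_functional {S : Set W} (hS : S.Finite) (hsal : IsSalient (hull ℝ S : Set W)) :
    ∃ l : W →ₗ[ℝ] ℝ, ∀ x ∈ hull ℝ S, x ≠ 0 → 0 < l x := by
  set T := (fun s => ‖s‖⁻¹ • s) '' (S \ {0})
  have hT : T ⊆ (hull ℝ S : Set W) \ {0} := by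
    rintro _ ⟨s, ⟨hs, hs0⟩, rfl⟩
    exact ⟨(hull ℝ S).smul_mem (inv_nonneg.2 (norm_nonneg s)) (subset_hull hs),
      smul_ne_zero (inv_ne_zero (norm_ne_zero_iff.2 hs0)) hs0⟩
  have h0 : (0 : W) ∉ convexHull ℝ T := fun h =>
    (convexHull_min hT hsal.convex_sdiff_zero h).2 rfl
  obtain ⟨f, hf⟩ := exists_lt_of_notMem_convexHull (hS.sdiff.image _) h0
  refine ⟨-(f : W →ₗ[ℝ] ℝ), fun x hx hx0 => pos_of_mem_hull (fun s hs hs0 => ?_) hx hx0⟩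
  have hfs := hf _ ⟨s, ⟨hs, hs0⟩, rfl⟩
  rw [map_zero, map_smul, smul_eq_mul] at hfs
  simpa using neg_of_mul_neg_right hfs (inv_nonneg.2 (norm_nonneg s))

theorem exists_exposing_functional {S : Set W} (hS : S.Finite) {l : W →ₗ[ℝ] ℝ}
    (hl : ∀ x ∈ hull ℝ S, x ≠ 0 → 0 < l x) {v : W} (hv : IsExtremalVec (hull ℝ S : Set W) v) :
    ∃ h : W →ₗ[ℝ] ℝ, h v = 0 ∧ ∀ x ∈ hull ℝ S, h x ≤ 0 ∧ (h x = 0 → x ∈ hull ℝ {v}) := by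
  set S' := S \ (hull ℝ {v} : Set W)
  have hlS' : ∀ s ∈ S', 0 < l s := fun s hs =>
    hl s (subset_hull hs.1) fun h0 => hs.2 (h0 ▸ zero_mem _)
  have hlv : 0 < l v := hl v hv.2.1 hv.1
  set N : W → W := fun s => (l s)⁻¹ • s
  have hNv : N v ∉ convexHull ℝ (N '' S') := by
    intro hmem
    have hNS' : N '' S' ⊆ hull ℝ S' := Set.image_subset_iff.2 fun s hs =>
      (hull ℝ S').smul_mem (inv_nonneg.2 (hlS' s hs).le) (subset_hull hs)
    have hvS' : v ∈ hull ℝ S' := by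
      simpa [N, smul_smul, hlv.ne'] using
        (hull ℝ S').smul_mem hlv.le (convexHull_min hNS' (hull ℝ S').convex hmem)
    obtain ⟨q, hq, u, hu, rfl⟩ :=
      hv.exists_pos_smul_mem (Submodule.span_mono Set.sdiff_subset) hvS'
    exact hq.2 (Submodule.mem_span_singleton.2 ⟨⟨u, hu.le⟩, rfl⟩)
  obtain ⟨f, hf⟩ := exists_lt_of_notMem_convexHull (hS.sdiff.image N) hNv
  set h : W →ₗ[ℝ] ℝ := (f : W →ₗ[ℝ] ℝ) - f (N v) • l
  have hN : ∀ x, 0 < l x → h x = l x * (f (N x) - f (N v)) := by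
    intro x hx
    simp only [h, N, LinearMap.sub_apply, LinearMap.smul_apply, ContinuousLinearMap.coe_coe,
      map_smul, smul_eq_mul]
    field_simp
  have hv0 : h v = 0 := by rw [hN v hlv, sub_self, mul_zero]
  have hneg : ∀ s ∈ S', s ≠ 0 → 0 < (-h) s := fun s hs _ => by
    rw [LinearMap.neg_apply, hN s (hlS' s hs), neg_pos]
    exact mul_neg_of_pos_of_neg (hlS' s hs) (sub_neg.2 (hf _ ⟨s, hs, rfl⟩))
  refine ⟨h, hv0, fun x hx => ?_⟩
  rw [← Set.inter_union_sdiff S (hull ℝ {v} : Set W), hull, Submodule.span_union,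
    Submodule.mem_sup] at hx
  obtain ⟨p, hp, y, hy, rfl⟩ := hx
  have hpv : p ∈ hull ℝ {v} := Submodule.span_le.2 Set.inter_subset_right hp
  have hhp : h p = 0 := by
    obtain ⟨⟨a, -⟩, rfl⟩ := Submodule.mem_span_singleton.1 hpv
    rw [Nonneg.mk_smul, map_smul, hv0, smul_zero]
  rw [map_add, hhp, zero_add]
  rcases eq_or_ne y 0 with rfl | hy0
  · simpa using hpv
  · have := pos_of_mem_hull hneg hy hy0
    rw [LinearMap.neg_apply, neg_pos] at this
    exact ⟨this.le, fun h0 => absurd h0 this.ne⟩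

end Functional

theorem exhaustion_criterion_general {n : ℕ}
    (C : Set (Fin n → ℝ)) (S : Set (Fin n → ℝ)) (hS : S.Finite)
    (hC : C = coneGen S) (hsal : IsSalient C)
    (L : Set (Fin n → ℝ)) (hL : ∀ v ∈ L, IsExtremalVec C v)
    (hne : L.Nonempty)
    (hclosed : ∀ r ∈ L, ∀ s : (Fin n → ℝ) ⧸ Submodule.span ℝ {r},
      IsExtremalVec ((Submodule.span ℝ {r}).mkQ '' C) s →
        ∃ r' ∈ L, ∃ t : ℝ, 0 < t ∧ (Submodule.span ℝ {r}).mkQ r' = t • s) :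
    ∀ v : Fin n → ℝ, IsExtremalVec C v → ∃ w ∈ L, ∃ t : ℝ, 0 < t ∧ w = t • v := by
  obtain rfl : C = hull ℝ S := hC.trans (coneGen_eq_hull S)
  intro v hv
  obtain ⟨l, hl⟩ := exists_pos_functional hS hsal
  obtain ⟨h, hhv, hh⟩ := exists_exposing_functional hS hl hv
  obtain ⟨r, hrL, hr⟩ := exists_forall_div_le hS hL hne h l
  have hlL : ∀ w ∈ L, 0 < l w := fun w hw => hl w (hL w hw).2.1 (hL w hw).1
  set c := h r / l r
  have hcr : h r = c * l r := (div_mul_cancel₀ _ (hlL r hrL).ne').symm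
  obtain ⟨y, hy, α, hvy⟩ := exists_mem_hull_add_smul_of_forall_isExtremalVec hS hsal
    (hL r hrL) (hclosed r hrL) hv.2.1
  have hLle : ∀ w ∈ L, 0 ≤ (c • l - h) w := fun w hw => by
    simpa [sub_nonneg] using (div_le_iff₀ (hlL w hw)).1 (hr w hw)
  have hhy : h y ≤ c * l y := by simpa [sub_nonneg] using nonneg_of_mem_hull hLle hy
  have hhv_le : h v ≤ c * l v := by
    rw [hvy, map_add, map_add, map_smul, map_smul, smul_eq_mul, smul_eq_mul, hcr]
    linarith
  have hc : 0 ≤ c := (mul_nonneg_iff_of_pos_right (hl v hv.2.1 hv.1)).1 (hhv ▸ hhv_le)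
  have hr0 : h r = 0 := le_antisymm (hh r (hL r hrL).2.1).1 (hcr ▸ mul_nonneg hc (hlL r hrL).le)
  obtain ⟨⟨a, ha⟩, hra⟩ := Submodule.mem_span_singleton.1 ((hh r (hL r hrL).2.1).2 hr0)
  refine ⟨r, hrL, a, ha.lt_of_ne ?_, hra.symm⟩
  rintro rfl
  exact (hL r hrL).1 (by rw [← hra, Nonneg.mk_smul, zero_smul])

theorem exhaustion_criterion {n : ℕ}
    (C : Set (Fin n → ℝ)) (S : Set (Fin n → ℝ)) (hS : S.Finite)
    (hC : C = coneGen S) (hsal : IsSalient C)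
    (hfull : Submodule.span ℝ C = ⊤)
    (L : Set (Fin n → ℝ)) (hL : ∀ v ∈ L, IsExtremalVec C v)
    (hne : L.Nonempty)
    (hclosed : ∀ r ∈ L, ∀ s : (Fin n → ℝ) ⧸ Submodule.span ℝ {r},
      IsExtremalVec ((Submodule.span ℝ {r}).mkQ '' C) s →
        ∃ r' ∈ L, ∃ t : ℝ, 0 < t ∧ (Submodule.span ℝ {r}).mkQ r' = t • s) :
    ∀ v : Fin n → ℝ, IsExtremalVec C v → ∃ w ∈ L, ∃ t : ℝ, 0 < t ∧ w = t • v :=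
  exhaustion_criterion_general C S hS hC hsal L hL hne hclosed
end
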